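/- For n, k, t, d positive integers with d ≥ 2k and (d+1) | t, suppose M is a t×n binary matrix that is d-runlength constrained and the map x ↦ Mx (integer matrix-vector product) is injective on binary vectors of Hamming weight exactly k. Then log₂ C(n,k) ≤ log₂ |{y ∈ {0,...,k}^t : Σ_i y_i ≤ kt/(d+1)}|, and consequently k log₂(n/k) ≤ t · h(k/(d+1)) + (kt/(d+1)) log₂(k+1), where h is the binary entropy function. -/

import Mathlib

def RunLengthConstrained (t d : ℕ) (x : Fin t → Bool) : Prop :=
  ∀ i i' : Fin t, i < i' → x i = true → x i' = true →
    d ≤ (Finset.univ.filter (fun j : Fin t => i < j ∧ j < i' ∧ x j = false)).card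

noncomputable def binEnt (p : ℝ) : ℝ :=
  -p * Real.logb 2 p - (1 - p) * Real.logb 2 (1 - p)

/-!
A run-length constrained column has at most `t / (d + 1)` ones, so every outcome of a `k`-sparse
test lies in the set of vectors with entries at most `k` and total sum at most `s = k t / (d + 1)`,
and injectivity on `k`-sets gives `C(n, k) ≤` the size of that set. A vector of that set is
determined by its support, of size at most `s`, and its values there, so the set has at most
`#{A : |A| ≤ s} (k + 1) ^ s` elements. Finally, with `p = s / t ≤ 1/2`, every term of
`∑_A p^|A| (1-p)^(t-|A|) = 1` with `|A| ≤ s` is at least `p ^ s (1 - p) ^ (t - s) = 2 ^ (-t h(p))`,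
which bounds the number of sets `A` with `|A| ≤ s`.
-/

open Finset Real

namespace RunLengthConstrained

variable {t d : ℕ} {x : Fin t → Bool}

theorem add_lt_of_lt (hx : RunLengthConstrained t d x) {i i' : Fin t} (hii' : i < i')
    (hi : x i = true) (hi' : x i' = true) : (i : ℕ) + d < i' := by
  have hsub : univ.filter (fun j : Fin t => i < j ∧ j < i' ∧ x j = false) ⊆ Ioo i i' :=
    fun j hj => by
      simp only [mem_filter, mem_Ioo] at hj ⊢
      exact ⟨hj.2.1, hj.2.2.1⟩
  have hgap := (hx i i' hii' hi hi').trans (card_le_card hsub)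
  rw [Fin.card_Ioo] at hgap
  have : (i : ℕ) < i' := hii'
  omega

/-- The ones of `x` lie in pairwise distinct blocks `[(d + 1) m, (d + 1) (m + 1))`. -/
theorem card_filter_le (hx : RunLengthConstrained t d x) :
    #(univ.filter fun i => x i = true) ≤ (t + d) / (d + 1) := by
  have hblock : ∀ a b : ℕ, a + (d + 1) ≤ b → a / (d + 1) < b / (d + 1) := fun a b hab =>
    calc a / (d + 1) < a / (d + 1) + 1 := lt_add_one _
      _ = (a + (d + 1)) / (d + 1) := (Nat.add_div_right a d.succ_pos).symm
      _ ≤ b / (d + 1) := Nat.div_le_div_right hab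
  have hmono : StrictMonoOn (fun i : Fin t => (i : ℕ) / (d + 1)) {i | x i = true} :=
    fun i hi i' hi' hii' => hblock _ _ (by have := hx.add_lt_of_lt hii' hi hi'; omega)
  calc #(univ.filter fun i => x i = true)
      ≤ #(range ((t + d) / (d + 1))) :=
        card_le_card_of_injOn _
          (fun i _ => mem_range.2 (hblock _ _ (by have := i.isLt; omega)))
          (hmono.injOn.mono fun i hi => (mem_filter.1 hi).2)
    _ = (t + d) / (d + 1) := card_range _

end RunLengthConstrained

def CappedSum (κ : Type*) [Fintype κ] (k s : ℕ) : Type _ :=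
  {y : κ → ℕ // (∀ i, y i ≤ k) ∧ ∑ i, y i ≤ s}

def smallSubsets (κ : Type*) [Fintype κ] (s : ℕ) : Finset (Finset κ) :=
  univ.filter fun A => #A ≤ s

section Counting

variable {κ : Type*} [Fintype κ]

theorem smallSubsets_nonempty (s : ℕ) : (smallSubsets κ s).Nonempty :=
  ⟨∅, by simp [smallSubsets]⟩

instance (k s : ℕ) : Finite (CappedSum κ k s) :=
  Finite.of_injective (fun y i => (⟨y.1 i, Nat.lt_succ_of_le (y.2.1 i)⟩ : Fin (k + 1)))
    fun _ _ h => Subtype.ext <| funext fun i => congrArg Fin.val (congrFun h i)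

instance (k s : ℕ) : Nonempty (CappedSum κ k s) :=
  ⟨⟨0, fun _ => Nat.zero_le k, by simp⟩⟩

theorem card_cappedSum_le (k s : ℕ) :
    Nat.card (CappedSum κ k s) ≤ #(smallSubsets κ s) * (k + 1) ^ s := by
  classical
  let supp (y : CappedSum κ k s) : Finset κ := univ.filter fun i => y.1 i ≠ 0
  have hsupp (y : CappedSum κ k s) : #(supp y) ≤ s :=
    calc #(supp y) = ∑ i ∈ supp y, 1 := card_eq_sum_ones _
      _ ≤ ∑ i ∈ supp y, y.1 i :=
        sum_le_sum fun i hi => Nat.one_le_iff_ne_zero.2 (mem_filter.1 hi).2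
      _ ≤ ∑ i, y.1 i := sum_le_sum_of_subset (filter_subset _ _)
      _ ≤ s := y.2.2
  let restrict (y : CappedSum κ k s) :
      Σ A : {A : Finset κ // #A ≤ s}, (A.1 → Fin (k + 1)) :=
    ⟨⟨supp y, hsupp y⟩, fun i => ⟨y.1 i, Nat.lt_succ_of_le (y.2.1 i)⟩⟩
  let extend (z : Σ A : {A : Finset κ // #A ≤ s}, (A.1 → Fin (k + 1))) (i : κ) : ℕ :=
    if h : i ∈ z.1.1 then z.2 ⟨i, h⟩ else 0
  have hextend (y : CappedSum κ k s) : extend (restrict y) = y.1 := funext fun i => by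
    by_cases hi : y.1 i = 0 <;> simp [extend, restrict, supp, hi]
  have hrestrict : Function.Injective restrict := fun y y' h =>
    Subtype.ext <| by rw [← hextend y, ← hextend y', h]
  calc Nat.card (CappedSum κ k s)
      ≤ Nat.card (Σ A : {A : Finset κ // #A ≤ s}, (A.1 → Fin (k + 1))) :=
        Nat.card_le_card_of_injective restrict hrestrict
    _ = ∑ A : {A : Finset κ // #A ≤ s}, (k + 1) ^ #A.1 := by
        rw [Nat.card_sigma]; simp
    _ ≤ ∑ _A : {A : Finset κ // #A ≤ s}, (k + 1) ^ s :=
        sum_le_sum fun A _ => Nat.pow_le_pow_right k.succ_pos A.2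
    _ = #(smallSubsets κ s) * (k + 1) ^ s := by
        rw [sum_const, smul_eq_mul, card_univ, Fintype.card_subtype]; rfl

end Counting

section GroupTesting

variable {κ ι : Type*} (M : κ → ι → Bool)

/-- `outcome M A` is the paper's `M x` for the indicator vector `x` of `A`. -/
def outcome (A : Finset ι) (i : κ) : ℕ :=
  ∑ j ∈ A, if M i j = true then 1 else 0

theorem outcome_le_card (A : Finset ι) (i : κ) : outcome M A i ≤ #A := by
  rw [outcome, sum_boole, Nat.cast_id]
  exact card_filter_le _ _

theorem sum_outcome_le [Fintype κ] {w : ℕ}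
    (hcol : ∀ j, #(univ.filter fun i => M i j = true) ≤ w) (A : Finset ι) : ∑ i, outcome M A i ≤ #A * w :=
  calc ∑ i, outcome M A i = ∑ j ∈ A, #(univ.filter fun i => M i j = true) := by
        simp only [outcome]; rw [sum_comm]; simp only [sum_boole, Nat.cast_id]
    _ ≤ ∑ _j ∈ A, w := sum_le_sum fun j _ => hcol j
    _ = #A * w := by rw [sum_const, smul_eq_mul]

theorem choose_le_card_cappedSum [Fintype κ] [Fintype ι] {k w : ℕ}
    (hcol : ∀ j, #(univ.filter fun i => M i j = true) ≤ w)
    (hinj : Set.InjOn (outcome M) {A | #A = k}) :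
    (Fintype.card ι).choose k ≤ Nat.card (CappedSum κ k (k * w)) := by
  let test (A : {A : Finset ι // #A = k}) : CappedSum κ k (k * w) :=
    ⟨outcome M A.1, fun i => (outcome_le_card M A.1 i).trans_eq A.2,
      (sum_outcome_le M hcol A.1).trans_eq (by rw [A.2])⟩
  have htest : Function.Injective test := fun A A' h =>
    Subtype.ext <| hinj A.2 A'.2 (congrArg Subtype.val h)
  simpa [Nat.card_eq_fintype_card, Fintype.card_finset_len] using
    Nat.card_le_card_of_injective test htest

end GroupTesting

section Entropy

variable {κ : Type*} [Fintype κ]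

theorem card_smallSubsets_mul_le_one {p : ℝ} (hp0 : 0 ≤ p) (hp : p ≤ 1 / 2) {s : ℕ}
    (hs : s ≤ Fintype.card κ) :
    #(smallSubsets κ s) * (p ^ s * (1 - p) ^ (Fintype.card κ - s)) ≤ 1 := by
  set t := Fintype.card κ
  have hq0 : 0 ≤ 1 - p := by linarith
  have hterm (A : Finset κ) (hA : #A ≤ s) :
      p ^ s * (1 - p) ^ (t - s) ≤ p ^ #A * (1 - p) ^ (t - #A) :=
    calc p ^ s * (1 - p) ^ (t - s) = p ^ #A * (p ^ (s - #A) * (1 - p) ^ (t - s)) := by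
          rw [← mul_assoc, ← pow_add, Nat.add_sub_cancel' hA]
      _ ≤ p ^ #A * ((1 - p) ^ (s - #A) * (1 - p) ^ (t - s)) := by gcongr; linarith
      _ = p ^ #A * (1 - p) ^ (t - #A) := by rw [← pow_add]; congr 2; omega
  calc #(smallSubsets κ s) * (p ^ s * (1 - p) ^ (t - s))
      = ∑ _A ∈ smallSubsets κ s, p ^ s * (1 - p) ^ (t - s) := by
        rw [sum_const, nsmul_eq_mul]
    _ ≤ ∑ A ∈ smallSubsets κ s, p ^ #A * (1 - p) ^ (t - #A) :=
        sum_le_sum fun A hA => hterm A (mem_filter.1 hA).2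
    _ ≤ ∑ A : Finset κ, p ^ #A * (1 - p) ^ (t - #A) :=
        sum_le_sum_of_subset_of_nonneg (subset_univ _) fun _ _ _ => by positivity
    _ = 1 := by rw [Fintype.sum_pow_mul_eq_add_pow]; simp

theorem logb_card_smallSubsets_le {p : ℝ} (hp0 : 0 < p) (hp : p ≤ 1 / 2) {s : ℕ}
    (hs : (s : ℝ) = p * Fintype.card κ) :
    logb 2 #(smallSubsets κ s) ≤ Fintype.card κ * binEnt p := by
  set t := Fintype.card κ
  have hst : s ≤ t := by
    have : (s : ℝ) ≤ t := by rw [hs]; nlinarith [t.cast_nonneg (α := ℝ)]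
    exact_mod_cast this
  have hq : 0 < 1 - p := by linarith
  have hQ : 0 < p ^ s * (1 - p) ^ (t - s) := by positivity
  calc logb 2 #(smallSubsets κ s)
      ≤ logb 2 (1 / (p ^ s * (1 - p) ^ (t - s))) :=
        logb_le_logb_of_le one_lt_two (by exact_mod_cast (smallSubsets_nonempty s).card_pos)
          ((le_div_iff₀ hQ).2 (card_smallSubsets_mul_le_one hp0.le hp hst))
    _ = t * binEnt p := by
        rw [one_div, logb_inv, logb_mul (by positivity) (by positivity), logb_pow, logb_pow,
          Nat.cast_sub hst, hs, binEnt]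
        ring

end Entropy

theorem Real.logb_natCast_le_logb_natCast {b : ℝ} (hb : 1 < b) {m n : ℕ} (h : m ≤ n) :
    logb b m ≤ logb b n := by
  rcases m.eq_zero_or_pos with rfl | hm
  · rw [Nat.cast_zero, logb_zero]
    exact div_nonneg (log_natCast_nonneg n) (log_nonneg hb.le)
  · exact logb_le_logb_of_le hb (by exact_mod_cast hm) (by exact_mod_cast h)

theorem logb_card_cappedSum_le {κ : Type*} [Fintype κ] {p : ℝ} (hp0 : 0 < p)
    (hp : p ≤ 1 / 2) (k : ℕ) {s : ℕ} (hs : (s : ℝ) = p * Fintype.card κ) :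
    logb 2 (Nat.card (CappedSum κ k s)) ≤ Fintype.card κ * binEnt p + s * logb 2 (k + 1) := by
  calc logb 2 (Nat.card (CappedSum κ k s))
      ≤ logb 2 (#(smallSubsets κ s) * (k + 1) ^ s : ℕ) :=
        logb_natCast_le_logb_natCast one_lt_two (card_cappedSum_le k s)
    _ = logb 2 #(smallSubsets κ s) + s * logb 2 (k + 1) := by
        push_cast
        rw [logb_mul (by exact_mod_cast (smallSubsets_nonempty s).card_pos.ne') (by positivity),
          logb_pow]
    _ ≤ Fintype.card κ * binEnt p + s * logb 2 (k + 1) := by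
        gcongr
        exact logb_card_smallSubsets_le hp0 hp hs

theorem Nat.pow_le_choose_mul_pow {n k : ℕ} (h : k ≤ n) : n ^ k ≤ n.choose k * k ^ k := by
  induction k generalizing n with
  | zero => simp
  | succ k ih =>
    obtain ⟨m, rfl⟩ : ∃ m, n = m + 1 := ⟨n - 1, by omega⟩
    rcases k.eq_zero_or_pos with rfl | hk
    · simp
    have hstep : (m + 1) ^ k * k ^ k ≤ m.choose k * (k + 1) ^ k * k ^ k :=
      calc (m + 1) ^ k * k ^ k = ((m + 1) * k) ^ k := (mul_pow _ _ _).symm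
        _ ≤ (m * (k + 1)) ^ k := Nat.pow_le_pow_left (by nlinarith) k
        _ = m ^ k * (k + 1) ^ k := mul_pow _ _ _
        _ ≤ m.choose k * k ^ k * (k + 1) ^ k := Nat.mul_le_mul_right _ (ih (by omega))
        _ = m.choose k * (k + 1) ^ k * k ^ k := by ring
    calc (m + 1) ^ (k + 1) = (m + 1) * (m + 1) ^ k := by ring
      _ ≤ (m + 1) * (m.choose k * (k + 1) ^ k) :=
        Nat.mul_le_mul_left _ (Nat.le_of_mul_le_mul_right hstep (by positivity))
      _ = (m + 1) * m.choose k * (k + 1) ^ k := by ring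
      _ = (m + 1).choose (k + 1) * (k + 1) ^ (k + 1) := by
        rw [Nat.add_one_mul_choose_eq]; ring

/-- For `n < k` both sides are nonpositive, the right one being `logb 2 0 = 0`. -/
theorem mul_logb_div_le_logb_choose (n k : ℕ) : k * logb 2 (n / k) ≤ logb 2 (n.choose k) := by
  rcases lt_or_ge n k with hnk | hkn
  · rw [Nat.choose_eq_zero_of_lt hnk, Nat.cast_zero, logb_zero]
    refine mul_nonpos_of_nonneg_of_nonpos k.cast_nonneg (logb_nonpos one_lt_two (by positivity) ?_)
    exact div_le_one_of_le₀ (by exact_mod_cast hnk.le) k.cast_nonneg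
  rcases k.eq_zero_or_pos with rfl | hk
  · simp
  have hn : (0 : ℝ) < n := by exact_mod_cast hk.trans_le hkn
  rw [← logb_pow]
  refine logb_le_logb_of_le one_lt_two (by positivity) ?_
  rw [div_pow, div_le_iff₀ (by positivity)]
  exact_mod_cast Nat.pow_le_choose_mul_pow hkn

theorem stmt17_general (t n d k : ℕ) (hk : 0 < k)
    (hdk : 2 * k ≤ d) (hdvd : (d + 1) ∣ t)
    (M : Fin t → Fin n → Bool)
    (hrl : ∀ j : Fin n, RunLengthConstrained t d (fun i => M i j))
    (hinj : ∀ x x' : Fin n → Bool,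
      (Finset.univ.filter (fun j => x j = true)).card = k →
      (Finset.univ.filter (fun j => x' j = true)).card = k →
      (fun i : Fin t => ∑ j ∈ Finset.univ.filter (fun j => x j = true),
        (if M i j = true then 1 else 0)) =
      (fun i : Fin t => ∑ j ∈ Finset.univ.filter (fun j => x' j = true),
        (if M i j = true then 1 else 0)) →
      x = x') :
    Real.logb 2 (Nat.choose n k) ≤
      Real.logb 2 (Nat.card {y : Fin t → ℕ //
        (∀ i, y i ≤ k) ∧ (∑ i, y i) ≤ k * t / (d + 1)}) ∧
    (k : ℝ) * Real.logb 2 ((n : ℝ) / k) ≤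
      (t : ℝ) * binEnt ((k : ℝ) / (d + 1)) +
        ((k : ℝ) * t / (d + 1)) * Real.logb 2 ((k : ℝ) + 1) := by
  have hcol (j : Fin n) : #(univ.filter fun i => M i j = true) ≤ t / (d + 1) := by
    simpa [Nat.add_div_of_dvd_right hdvd, Nat.div_eq_of_lt d.lt_succ_self] using
      (hrl j).card_filter_le
  have hinjOn : Set.InjOn (outcome M) {A | #A = k} := fun A hA A' hA' h => by
    have := hinj (fun j => decide (j ∈ A)) (fun j => decide (j ∈ A')) (by simpa using hA)
      (by simpa using hA')
      (by simp only [decide_eq_true_eq, filter_mem_eq_inter, univ_inter]; exact h)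
    ext j
    simpa using congrFun this j
  have hchoose : n.choose k ≤ Nat.card (CappedSum (Fin t) k (k * t / (d + 1))) := by
    simpa [Nat.mul_div_assoc k hdvd] using choose_le_card_cappedSum M hcol hinjOn
  have hlog := logb_natCast_le_logb_natCast one_lt_two hchoose
  refine ⟨hlog, ?_⟩
  have hp : (k : ℝ) / (d + 1) ≤ 1 / 2 := by
    rw [div_le_div_iff₀ (by positivity) two_pos]
    exact_mod_cast (by omega : k * 2 ≤ 1 * (d + 1))
  have hs : ((k * t / (d + 1) : ℕ) : ℝ) = k / (d + 1) * t := by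
    rw [Nat.cast_div (dvd_mul_of_dvd_right hdvd k) (by positivity)]
    push_cast
    ring
  calc (k : ℝ) * logb 2 (n / k) ≤ logb 2 (n.choose k) := mul_logb_div_le_logb_choose n k
    _ ≤ logb 2 (Nat.card (CappedSum (Fin t) k (k * t / (d + 1)))) := hlog
    _ ≤ _ := (logb_card_cappedSum_le (κ := Fin t) (by positivity) hp k
          (by rw [hs, Fintype.card_fin])).trans_eq (by rw [hs, Fintype.card_fin]; ring)

/-- Counting bound for runlength-constrained quantitative group testing. -/
theorem stmt17 (t n d k : ℕ) (ht : 0 < t) (hn : 0 < n) (hk : 0 < k) (hd : 0 < d)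
    (hdk : 2 * k ≤ d) (hdvd : (d + 1) ∣ t)
    (M : Fin t → Fin n → Bool)
    (hrl : ∀ j : Fin n, RunLengthConstrained t d (fun i => M i j))
    (hinj : ∀ x x' : Fin n → Bool,
      (Finset.univ.filter (fun j => x j = true)).card = k →
      (Finset.univ.filter (fun j => x' j = true)).card = k →
      (fun i : Fin t => ∑ j ∈ Finset.univ.filter (fun j => x j = true),
        (if M i j = true then 1 else 0)) =
      (fun i : Fin t => ∑ j ∈ Finset.univ.filter (fun j => x' j = true),
        (if M i j = true then 1 else 0)) →
      x = x') :
    Real.logb 2 (Nat.choose n k) ≤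
      Real.logb 2 (Nat.card {y : Fin t → ℕ //
        (∀ i, y i ≤ k) ∧ (∑ i, y i) ≤ k * t / (d + 1)}) ∧
    (k : ℝ) * Real.logb 2 ((n : ℝ) / k) ≤
      (t : ℝ) * binEnt ((k : ℝ) / (d + 1)) +
        ((k : ℝ) * t / (d + 1)) * Real.logb 2 ((k : ℝ) + 1) :=
  stmt17_general t n d k hk hdk hdvd M hrl hinj
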